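/- arXiv:2208.03590 — 4 statements merged into one kernel-verified Lean document; each statement's English description precedes it below -/
import Mathlib

section
/- Let κ and β be real numbers with 0 ≤ κ < β ≤ 1, and let g, u, v, y, z ≥ 0 be real numbers. Then (g + u + v + y + z)^κ ≤ ( g + 3 + u^{κ/β} + v^{κ/β} + y + z )^β. -/
private lemma aux_add_rpow (x y θ : ℝ) (hx : 0 ≤ x) (hy : 0 ≤ y)
    (h0 : 0 ≤ θ) (h1 : θ ≤ 1) : (x + y) ^ θ ≤ x ^ θ + y ^ θ := by
  lift x to NNReal using hx
  lift y to NNReal using hy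
  have := NNReal.rpow_add_le_add_rpow x y h0 h1
  exact_mod_cast this

private lemma aux_rpow_le_add_one (x θ : ℝ) (hx : 0 ≤ x) (h0 : 0 ≤ θ) (h1 : θ ≤ 1) :
    x ^ θ ≤ x + 1 := by
  rcases le_total x 1 with h | h
  · have : x ^ θ ≤ 1 := Real.rpow_le_one hx h h0
    linarith
  · have : x ^ θ ≤ x ^ (1 : ℝ) := Real.rpow_le_rpow_of_exponent_le h h1
    rw [Real.rpow_one] at this
    linarith

/-- Pointwise power inequality from the proof of Theorem 3.6: for `0 ≤ κ < β ≤ 1`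
and nonnegative reals `g, u, v, y, z`,
`(g + u + v + y + z) ^ κ ≤ (g + 3 + u ^ (κ/β) + v ^ (κ/β) + y + z) ^ β`. -/
theorem stmt_9 (κ β : ℝ) (hκ : 0 ≤ κ) (hκβ : κ < β) (hβ : β ≤ 1)
    (g u v y z : ℝ) (hg : 0 ≤ g) (hu : 0 ≤ u) (hv : 0 ≤ v) (hy : 0 ≤ y) (hz : 0 ≤ z) :
    (g + u + v + y + z) ^ κ ≤ (g + 3 + u ^ (κ / β) + v ^ (κ / β) + y + z) ^ β := by
  have hβ0 : 0 < β := lt_of_le_of_lt hκ hκβ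
  set θ := κ / β with hθdef
  have hθ0 : 0 ≤ θ := div_nonneg hκ hβ0.le
  have hθ1 : θ ≤ 1 := by
    rw [div_le_one hβ0]; exact hκβ.le
  have hA : 0 ≤ g + u + v + y + z := by positivity
  -- Step 1: (g+u+v+y+z)^θ ≤ g+3+u^θ+v^θ+y+z
  have step1 : (g + u + v + y + z) ^ θ ≤ g + 3 + u ^ θ + v ^ θ + y + z := by
    have h1 : (g + u + v + y + z) ^ θ ≤ (g + u + v + y) ^ θ + z ^ θ :=
      aux_add_rpow _ z θ (by positivity) hz hθ0 hθ1
    have h2 : (g + u + v + y) ^ θ ≤ (g + u + v) ^ θ + y ^ θ :=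
      aux_add_rpow _ y θ (by positivity) hy hθ0 hθ1
    have h3 : (g + u + v) ^ θ ≤ (g + u) ^ θ + v ^ θ :=
      aux_add_rpow _ v θ (by positivity) hv hθ0 hθ1
    have h4 : (g + u) ^ θ ≤ g ^ θ + u ^ θ :=
      aux_add_rpow g u θ hg hu hθ0 hθ1
    have hgb := aux_rpow_le_add_one g θ hg hθ0 hθ1
    have hyb := aux_rpow_le_add_one y θ hy hθ0 hθ1
    have hzb := aux_rpow_le_add_one z θ hz hθ0 hθ1
    linarith
  have hB : 0 ≤ g + 3 + u ^ θ + v ^ θ + y + z := by positivity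
  calc (g + u + v + y + z) ^ κ = ((g + u + v + y + z) ^ θ) ^ β := by
        rw [← Real.rpow_mul hA, hθdef, div_mul_cancel₀ _ hβ0.ne']
    _ ≤ (g + 3 + u ^ θ + v ^ θ + y + z) ^ β :=
        Real.rpow_le_rpow (Real.rpow_nonneg hA θ) step1 hβ0.le
end

section
/- Let T > 0 and let (Ω, 𝓕, P) be a probability space. Let g, Z : Ω × [0,T] → [0,∞) be jointly measurable processes, let κ ∈ (0,1), q ∈ (κ,1) and set p₀ := q/κ. Then E[ ( ∫_0^T g_r^κ · 𝟙_{\{Z_r ≥ 1\}} dr )^{p₀} ] ≤ T^{p₀ − 1 + (2−q)(1−q)/2} · ( E ∫_0^T g_r dr )^{q} · ( E ( ∫_0^T Z_r^2 dr )^{q/2} )^{1−q}. -/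
open MeasureTheory Set
open scoped ENNReal

/-!
Hölder in time with exponent `p₀ = q/κ` bounds `(∫ g^κ 𝟙_{Z ≥ 1})^{p₀}` by
`T^{p₀-1} ∫ g^q 𝟙_{Z ≥ 1}`. Hölder on `Ω × [0,T]` with exponents `1/q` and `1/(1-q)` bounds the
expectation of the latter by `(E ∫ g)^q` times the `(1-q)`-th power of the measure of `{Z ≥ 1}`,
and that measure is at most `E ∫ (Z²)^{q/2} ≤ T^{1-q/2} E (∫ Z²)^{q/2}` by `𝟙_{Z ≥ 1} ≤ (Z²)^{q/2}`
and Hölder in time once more.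
-/

section Holder

variable {α : Type*} [MeasurableSpace α] {μ : Measure α} {f : α → ℝ≥0∞}

theorem lintegral_rpow_le_rpow_lintegral_mul_measure_univ (hf : AEMeasurable f μ) {s : ℝ}
    (hs0 : 0 ≤ s) (hs1 : s ≤ 1) :
    ∫⁻ a, f a ^ s ∂μ ≤ (∫⁻ a, f a ∂μ) ^ s * μ univ ^ (1 - s) := by
  simpa using ENNReal.lintegral_mul_norm_pow_le hf (aemeasurable_const (b := (1 : ℝ≥0∞)))
    hs0 (sub_nonneg.2 hs1) (add_sub_cancel s 1)

theorem rpow_lintegral_le_measure_univ_rpow_mul_lintegral_rpow (hf : AEMeasurable f μ) {p : ℝ}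
    (hp : 1 ≤ p) :
    (∫⁻ a, f a ∂μ) ^ p ≤ μ univ ^ (p - 1) * ∫⁻ a, f a ^ p ∂μ := by
  have hp0 : 0 < p := one_pos.trans_le hp
  have h := lintegral_rpow_le_rpow_lintegral_mul_measure_univ (hf.pow_const p)
    (one_div_nonneg.2 hp0.le) (div_le_one_of_le₀ hp hp0.le)
  simp only [← ENNReal.rpow_mul, mul_one_div_cancel hp0.ne', ENNReal.rpow_one] at h
  calc (∫⁻ a, f a ∂μ) ^ p
      ≤ ((∫⁻ a, f a ^ p ∂μ) ^ (1 / p) * μ univ ^ (1 - 1 / p)) ^ p := by gcongr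
    _ = μ univ ^ (p - 1) * ∫⁻ a, f a ^ p ∂μ := by
      rw [ENNReal.mul_rpow_of_nonneg _ _ hp0.le, ← ENNReal.rpow_mul, ← ENNReal.rpow_mul,
        one_div_mul_cancel hp0.ne', ENNReal.rpow_one, mul_comm,
        show (1 - 1 / p) * p = p - 1 by field_simp]

theorem setLIntegral_rpow_le_rpow_lintegral_mul_measure_rpow (hf : AEMeasurable f μ) (S : Set α)
    {s : ℝ} (hs0 : 0 ≤ s) (hs1 : s ≤ 1) :
    ∫⁻ a in S, f a ^ s ∂μ ≤ (∫⁻ a, f a ∂μ) ^ s * μ S ^ (1 - s) := by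
  calc ∫⁻ a in S, f a ^ s ∂μ
      ≤ (∫⁻ a in S, f a ∂μ) ^ s * μ S ^ (1 - s) := by
        simpa using lintegral_rpow_le_rpow_lintegral_mul_measure_univ hf.restrict hs0 hs1
    _ ≤ (∫⁻ a, f a ∂μ) ^ s * μ S ^ (1 - s) := by
        gcongr
        exact Measure.restrict_le_self

end Holder

section Processes

variable {Ω β : Type*} [MeasurableSpace Ω] [MeasurableSpace β] (P : Measure Ω)
  (μ : Measure β) [SFinite μ]

theorem lintegral_rpow_lintegral_ite_le {g Z : Ω → β → ℝ} (hg : Measurable (Function.uncurry g))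
    (hZ : Measurable (Function.uncurry Z)) (hg0 : ∀ ω r, 0 ≤ g ω r) {κ q : ℝ} (hκ : 0 < κ)
    (hκq : κ ≤ q) :
    ∫⁻ ω, (∫⁻ r, ENNReal.ofReal (if 1 ≤ Z ω r then g ω r ^ κ else 0) ∂μ) ^ (q / κ) ∂P
      ≤ μ univ ^ (q / κ - 1) * ∫⁻ x in {x | 1 ≤ Function.uncurry Z x},
          ENNReal.ofReal (Function.uncurry g x) ^ q ∂P.prod μ := by
  set S := {x | 1 ≤ Function.uncurry Z x}
  have hS : MeasurableSet S := measurableSet_le measurable_const hZ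
  set F := S.indicator fun x => ENNReal.ofReal (Function.uncurry g x) ^ q
  have hF : Measurable F := ((ENNReal.measurable_ofReal.comp hg).pow_const q).indicator hS
  have hpow : ∀ ω r, ENNReal.ofReal (if 1 ≤ Z ω r then g ω r ^ κ else 0) ^ (q / κ) = F (ω, r) := by
    intro ω r
    by_cases hZr : 1 ≤ Z ω r
    · simp only [hZr, if_true, F, S, indicator_of_mem (show (ω, r) ∈ S from hZr)]
      rw [← ENNReal.ofReal_rpow_of_nonneg (hg0 ω r) hκ.le, ← ENNReal.rpow_mul,
        mul_div_cancel₀ q hκ.ne']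
      rfl
    · simp only [hZr, if_false, ENNReal.ofReal_zero, F, S,
        indicator_of_notMem (show (ω, r) ∉ S from hZr)]
      exact ENNReal.zero_rpow_of_pos (div_pos (hκ.trans_le hκq) hκ)
  have hf : ∀ ω, AEMeasurable (fun r => ENNReal.ofReal (if 1 ≤ Z ω r then g ω r ^ κ else 0)) μ :=
    fun ω => (ENNReal.measurable_ofReal.comp (Measurable.ite
      (measurableSet_le measurable_const hZ.of_uncurry_left) (hg.of_uncurry_left.pow_const κ)
      measurable_const)).aemeasurable
  calc _ ≤ ∫⁻ ω, μ univ ^ (q / κ - 1) * ∫⁻ r, F (ω, r) ∂μ ∂P := by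
        refine lintegral_mono fun ω => ?_
        simpa only [hpow] using rpow_lintegral_le_measure_univ_rpow_mul_lintegral_rpow (hf ω)
          ((one_le_div hκ).2 hκq)
    _ = μ univ ^ (q / κ - 1) * ∫⁻ x, F x ∂P.prod μ := by
        rw [lintegral_const_mul _ hF.lintegral_prod_right', lintegral_prod _ hF.aemeasurable]
    _ = _ := by rw [lintegral_indicator hS]

theorem measure_prod_setOf_one_le_le {Z : Ω → β → ℝ} (hZ : Measurable (Function.uncurry Z))
    {s : ℝ} (hs0 : 0 ≤ s) (hs1 : s ≤ 1) :
    P.prod μ {x | 1 ≤ Function.uncurry Z x}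
      ≤ μ univ ^ (1 - s) * ∫⁻ ω, (∫⁻ r, ENNReal.ofReal (Z ω r ^ 2) ∂μ) ^ s ∂P := by
  set S := {x | 1 ≤ Function.uncurry Z x}
  have hS : MeasurableSet S := measurableSet_le measurable_const hZ
  set W : Ω × β → ℝ≥0∞ := fun x => ENNReal.ofReal (Function.uncurry Z x ^ 2)
  have hW : Measurable W := ENNReal.measurable_ofReal.comp (hZ.pow_const 2)
  have hWS : ∀ x ∈ S, 1 ≤ W x ^ s := fun x hx =>
    (ENNReal.one_rpow s).symm.trans_le
      (ENNReal.rpow_le_rpow (ENNReal.one_le_ofReal.2 (one_le_pow₀ hx)) hs0)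
  calc P.prod μ S = ∫⁻ x in S, 1 ∂P.prod μ := (setLIntegral_one S).symm
    _ ≤ ∫⁻ x in S, W x ^ s ∂P.prod μ := setLIntegral_mono' hS hWS
    _ ≤ ∫⁻ x, W x ^ s ∂P.prod μ := setLIntegral_le_lintegral S _
    _ = ∫⁻ ω, ∫⁻ r, W (ω, r) ^ s ∂μ ∂P := lintegral_prod _ (hW.pow_const s).aemeasurable
    _ ≤ ∫⁻ ω, (∫⁻ r, W (ω, r) ∂μ) ^ s * μ univ ^ (1 - s) ∂P :=
        lintegral_mono fun ω => lintegral_rpow_le_rpow_lintegral_mul_measure_univ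
          (hW.comp measurable_prodMk_left).aemeasurable hs0 hs1
    _ = _ := by
        rw [lintegral_mul_const _ (hW.lintegral_prod_right'.pow_const s), mul_comm]
        rfl

end Processes

theorem stmt_11_general {Ω : Type*} [MeasurableSpace Ω] (P : Measure Ω)
    (T : ℝ) (hT : 0 < T)
    (g Z : Ω → ℝ → ℝ)
    (hg : Measurable (Function.uncurry g)) (hZ : Measurable (Function.uncurry Z))
    (hg0 : ∀ ω r, 0 ≤ g ω r)
    (κ q : ℝ) (hκ : κ ∈ Set.Ioo (0:ℝ) 1) (hq : q ∈ Set.Ioo κ 1)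
    (p₀ : ℝ) (hp₀ : p₀ = q / κ) :
    ∫⁻ ω, (∫⁻ r in Icc (0:ℝ) T,
        ENNReal.ofReal (if 1 ≤ Z ω r then g ω r ^ κ else 0)) ^ p₀ ∂P
      ≤ ENNReal.ofReal (T ^ (p₀ - 1 + (2 - q) * (1 - q) / 2)) *
          (∫⁻ ω, (∫⁻ r in Icc (0:ℝ) T, ENNReal.ofReal (g ω r)) ∂P) ^ q *
          (∫⁻ ω, (∫⁻ r in Icc (0:ℝ) T, ENNReal.ofReal (Z ω r ^ 2)) ^ (q / 2) ∂P) ^ (1 - q) := by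
  obtain ⟨hκ0, -⟩ := hκ
  obtain ⟨hκq, hq1⟩ := hq
  have hq0 : 0 < q := hκ0.trans hκq
  subst hp₀
  set μ := volume.restrict (Icc (0:ℝ) T)
  have hμ : μ univ = ENNReal.ofReal T := by simp [μ]
  have hE1 : ∫⁻ x, ENNReal.ofReal (Function.uncurry g x) ∂P.prod μ
      = ∫⁻ ω, ∫⁻ r, ENNReal.ofReal (g ω r) ∂μ ∂P :=
    lintegral_prod _ (ENNReal.measurable_ofReal.comp hg).aemeasurable
  calc _ ≤ μ univ ^ (q / κ - 1) * ∫⁻ x in {x | 1 ≤ Function.uncurry Z x},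
          ENNReal.ofReal (Function.uncurry g x) ^ q ∂P.prod μ :=
        lintegral_rpow_lintegral_ite_le P μ hg hZ hg0 hκ0 hκq.le
    _ ≤ μ univ ^ (q / κ - 1) * ((∫⁻ ω, ∫⁻ r, ENNReal.ofReal (g ω r) ∂μ ∂P) ^ q *
          (P.prod μ {x | 1 ≤ Function.uncurry Z x}) ^ (1 - q)) := by
        rw [← hE1]
        gcongr
        exact setLIntegral_rpow_le_rpow_lintegral_mul_measure_rpow
          (ENNReal.measurable_ofReal.comp hg).aemeasurable _ hq0.le hq1.le
    _ ≤ μ univ ^ (q / κ - 1) * ((∫⁻ ω, ∫⁻ r, ENNReal.ofReal (g ω r) ∂μ ∂P) ^ q *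
          (μ univ ^ (1 - q / 2) *
            ∫⁻ ω, (∫⁻ r, ENNReal.ofReal (Z ω r ^ 2) ∂μ) ^ (q / 2) ∂P) ^ (1 - q)) := by
        gcongr
        exact measure_prod_setOf_one_le_le P μ hZ (by positivity) (by linarith)
    _ = _ := by
        have hτ0 : ENNReal.ofReal T ≠ 0 := (ENNReal.ofReal_pos.2 hT).ne'
        rw [hμ, ENNReal.mul_rpow_of_nonneg _ _ (by linarith), ← ENNReal.rpow_mul,
          ← ENNReal.ofReal_rpow_of_pos hT,
          show q / κ - 1 + (2 - q) * (1 - q) / 2 = (q / κ - 1) + (1 - q / 2) * (1 - q) by ring,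
          ENNReal.rpow_add _ _ hτ0 ENNReal.ofReal_ne_top]
        ring

/-- Combination of (eq.split2) and (eq.split3) from the proof of Theorem 3.5:
`E (∫_0^T g^κ 𝟙_{Z ≥ 1})^{p₀} ≤ T^{p₀−1+(2−q)(1−q)/2} (E∫_0^T g)^q (E(∫_0^T Z²)^{q/2})^{1−q}`
with `p₀ = q/κ`.  All expectations may be infinite. -/
theorem stmt_11 {Ω : Type*} [MeasurableSpace Ω] (P : Measure Ω) [IsProbabilityMeasure P]
    (T : ℝ) (hT : 0 < T)
    (g Z : Ω → ℝ → ℝ)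
    (hg : Measurable (Function.uncurry g)) (hZ : Measurable (Function.uncurry Z))
    (hg0 : ∀ ω r, 0 ≤ g ω r) (hZ0 : ∀ ω r, 0 ≤ Z ω r)
    (κ q : ℝ) (hκ : κ ∈ Set.Ioo (0:ℝ) 1) (hq : q ∈ Set.Ioo κ 1)
    (p₀ : ℝ) (hp₀ : p₀ = q / κ) :
    ∫⁻ ω, (∫⁻ r in Icc (0:ℝ) T,
        ENNReal.ofReal (if 1 ≤ Z ω r then g ω r ^ κ else 0)) ^ p₀ ∂P
      ≤ ENNReal.ofReal (T ^ (p₀ - 1 + (2 - q) * (1 - q) / 2)) *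
          (∫⁻ ω, (∫⁻ r in Icc (0:ℝ) T, ENNReal.ofReal (g ω r)) ∂P) ^ q *
          (∫⁻ ω, (∫⁻ r in Icc (0:ℝ) T, ENNReal.ofReal (Z ω r ^ 2)) ^ (q / 2) ∂P) ^ (1 - q) :=
  stmt_11_general P T hT g Z hg hZ hg0 κ q hκ hq p₀ hp₀
end

section
/- Let T > 0, T₁ := 1 ∨ T, and let (Ω, 𝓕, P) be a probability space. Let λ, γ ≥ 0, κ ∈ (0,1), q ∈ (κ,1), and set γ_λ := (λ + γ) ∨ 1. Let g : Ω × [0,T] → [0,∞) and Z : Ω × [0,T] → ℝ^{d×k} be jointly measurable processes, and let f : Ω × [0,T] × ℝ^{d×k} → ℝ^k be jointly measurable and satisfy, for all (ω,t) and z, z′ ∈ ℝ^{d×k}: |f(t,z) − f(t,z′)| ≤ λ|z − z′| and |f(t,z) − f(t,0)| ≤ γ (g_t + |z|)^κ. Then E ∫_0^T |f(r, Z_r)| dr ≤ E ∫_0^T |f(r,0)| dr + γ_λ · ( E ∫_0^T g_r dr )^{κ} · ( T^{1−q/2} E ( ∫_0^T |Z_r|^2 dr )^{q/2} )^{1−κ}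 + γ_λ · T^{1−κ/2} · ( E ( ∫_0^T |Z_r|^2 dr )^{q/2} )^{κ/q}. -/
open MeasureTheory Set
open scoped ENNReal

/-!
Pointwise, the Lipschitz bound controls `f(Z) - f(0)` where `|Z| < 1` and the growth bound where
`|Z| ≥ 1`, which gives `|f(Z) - f(0)| ≤ γ_λ (g^κ |Z|^{q(1-κ)} + |Z|^κ)`. The first term is
integrated with Hölder's inequality for the exponents `κ, 1 - κ` on `P ⊗ dt`; the powers `|Z|^q`
and `|Z|^κ` are then compared with `|Z|²` by Jensen's inequality in time, and, for the last term,
once more in `ω` for the concave power `κ / q`.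
-/

section Holder

variable {α : Type*} [MeasurableSpace α] {μ : Measure α}

lemma lintegral_rpow_le_lintegral_mul_measure_univ {v : α → ℝ≥0∞} (hv : AEMeasurable v μ)
    {s : ℝ} (hs0 : 0 ≤ s) (hs1 : s ≤ 1) :
    ∫⁻ a, v a ^ s ∂μ ≤ (∫⁻ a, v a ∂μ) ^ s * μ univ ^ (1 - s) := by
  simpa using ENNReal.lintegral_mul_norm_pow_le hv aemeasurable_const hs0 (sub_nonneg.2 hs1)
    (add_sub_cancel s 1) (μ := μ) (g := fun _ => 1)

lemma lintegral_rpow_le_lintegral_rpow_mul_measure_univ {v : α → ℝ≥0∞}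
    (hv : AEMeasurable v μ) {p r : ℝ} (hp : 0 ≤ p) (hpr : p ≤ r) (hr : 0 < r) :
    ∫⁻ a, v a ^ p ∂μ ≤ (∫⁻ a, v a ^ r ∂μ) ^ (p / r) * μ univ ^ (1 - p / r) := by
  have hvp : ∀ a, v a ^ p = (v a ^ r) ^ (p / r) := fun a => by
    rw [← ENNReal.rpow_mul, mul_div_cancel₀ p hr.ne']
  simp_rw [hvp]
  exact lintegral_rpow_le_lintegral_mul_measure_univ (hv.pow_const r) (div_nonneg hp hr.le)
    ((div_le_one hr).2 hpr)

end Holder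

lemma le_mul_rpow_mul_rpow_add_rpow {D lam γ C κ e a z : ℝ} (hlam : lam ≤ C) (hγ : γ ≤ C)
    (hC : 0 ≤ C) (hκ0 : 0 ≤ κ) (hκ1 : κ ≤ 1) (he : 0 ≤ e) (ha : 0 ≤ a) (hz : 0 ≤ z)
    (hLip : D ≤ lam * z) (hGrowth : D ≤ γ * (a + z) ^ κ) :
    D ≤ C * (a ^ κ * z ^ e + z ^ κ) := by
  have haκ : 0 ≤ a ^ κ := Real.rpow_nonneg ha κ
  rcases le_or_gt 1 z with hz1 | hz1
  · calc D ≤ γ * (a + z) ^ κ := hGrowth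
      _ ≤ C * (a ^ κ + z ^ κ) := by
          gcongr
          exact Real.rpow_add_le_add_rpow ha hz hκ0 hκ1
      _ ≤ C * (a ^ κ * z ^ e + z ^ κ) := by
          gcongr
          exact le_mul_of_one_le_right haκ (Real.one_le_rpow hz1 he)
  · have hzκ : 0 ≤ z ^ e := Real.rpow_nonneg hz e
    calc D ≤ lam * z := hLip
      _ ≤ C * z ^ κ := by
          gcongr
          exact Real.self_le_rpow_of_le_one hz hz1.le hκ1
      _ ≤ C * (a ^ κ * z ^ e + z ^ κ) := by
          gcongr
          exact le_add_of_nonneg_left (mul_nonneg haκ hzκ)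

lemma ofReal_norm_apply_le_of_lipschitz_of_growth {E F : Type*} [SeminormedAddCommGroup E]
    [SeminormedAddCommGroup F] {φ : E → F} {lam γ κ e a : ℝ} (hlam : 0 ≤ lam) (hγ : 0 ≤ γ)
    (hκ0 : 0 ≤ κ) (hκ1 : κ ≤ 1) (he : 0 ≤ e) (ha : 0 ≤ a)
    (hLip : ∀ z z', ‖φ z - φ z'‖ ≤ lam * ‖z - z'‖)
    (hGrowth : ∀ z, ‖φ z - φ 0‖ ≤ γ * (a + ‖z‖) ^ κ) (z : E) :
    ENNReal.ofReal ‖φ z‖ ≤ ENNReal.ofReal ‖φ 0‖ + ENNReal.ofReal (max (lam + γ) 1) *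
      (ENNReal.ofReal a ^ κ * ENNReal.ofReal ‖z‖ ^ e + ENNReal.ofReal ‖z‖ ^ κ) := by
  have hC : 0 ≤ max (lam + γ) 1 := zero_le_one.trans (le_max_right _ _)
  have hz := norm_nonneg z
  have hsub := le_mul_rpow_mul_rpow_add_rpow (le_max_of_le_left (le_add_of_nonneg_right hγ))
    (le_max_of_le_left (le_add_of_nonneg_left hlam)) hC hκ0 hκ1 he ha hz
    (by simpa using hLip z 0) (hGrowth z)
  rw [ENNReal.ofReal_rpow_of_nonneg ha hκ0, ENNReal.ofReal_rpow_of_nonneg hz he,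
    ENNReal.ofReal_rpow_of_nonneg hz hκ0, ← ENNReal.ofReal_mul (Real.rpow_nonneg ha κ),
    ← ENNReal.ofReal_add (by positivity) (by positivity), ← ENNReal.ofReal_mul hC,
    ← ENNReal.ofReal_add (norm_nonneg _) (by positivity)]
  exact ENNReal.ofReal_le_ofReal ((norm_le_norm_add_norm_sub' _ _).trans (by linarith))

section Iterated

variable {α β : Type*} [MeasurableSpace α] [MeasurableSpace β] {μ : Measure α} {ν : Measure β}
  [SFinite ν]

lemma lintegral_lintegral_rpow_le {N : α → β → ℝ≥0∞} (hN : Measurable (Function.uncurry N))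
    {p r : ℝ} (hp : 0 ≤ p) (hpr : p ≤ r) (hr : 0 < r) :
    ∫⁻ a, ∫⁻ b, N a b ^ p ∂ν ∂μ ≤
      ν univ ^ (1 - p / r) * ∫⁻ a, (∫⁻ b, N a b ^ r ∂ν) ^ (p / r) ∂μ := by
  have hNr : Measurable fun a => (∫⁻ b, N a b ^ r ∂ν) ^ (p / r) :=
    ((hN.pow_const r).lintegral_prod_right').pow_const _
  calc ∫⁻ a, ∫⁻ b, N a b ^ p ∂ν ∂μ
      ≤ ∫⁻ a, (∫⁻ b, N a b ^ r ∂ν) ^ (p / r) * ν univ ^ (1 - p / r) ∂μ :=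
        lintegral_mono fun a => lintegral_rpow_le_lintegral_rpow_mul_measure_univ
          (hN.comp measurable_prodMk_left).aemeasurable hp hpr hr
    _ = ν univ ^ (1 - p / r) * ∫⁻ a, (∫⁻ b, N a b ^ r ∂ν) ^ (p / r) ∂μ := by
        rw [lintegral_mul_const _ hNr, mul_comm]

lemma lintegral_lintegral_rpow_mul_rpow_le {G N : α → β → ℝ≥0∞}
    (hG : Measurable (Function.uncurry G)) (hN : Measurable (Function.uncurry N))
    {κ p r : ℝ} (hκ0 : 0 ≤ κ) (hκ1 : κ ≤ 1) (hp : 0 ≤ p) (hpr : p ≤ r) (hr : 0 < r) :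
    ∫⁻ a, ∫⁻ b, G a b ^ κ * N a b ^ (p * (1 - κ)) ∂ν ∂μ ≤
      (∫⁻ a, ∫⁻ b, G a b ∂ν ∂μ) ^ κ *
        (ν univ ^ (1 - p / r) * ∫⁻ a, (∫⁻ b, N a b ^ r ∂ν) ^ (p / r) ∂μ) ^ (1 - κ) := by
  have hGN : Measurable fun x : α × β => G x.1 x.2 ^ κ * (N x.1 x.2 ^ p) ^ (1 - κ) :=
    (hG.pow_const κ).mul ((hN.pow_const p).pow_const (1 - κ))
  calc ∫⁻ a, ∫⁻ b, G a b ^ κ * N a b ^ (p * (1 - κ)) ∂ν ∂μ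
      = ∫⁻ x, G x.1 x.2 ^ κ * (N x.1 x.2 ^ p) ^ (1 - κ) ∂μ.prod ν := by
        rw [lintegral_prod _ hGN.aemeasurable]
        simp_rw [← ENNReal.rpow_mul]
    _ ≤ (∫⁻ x, G x.1 x.2 ∂μ.prod ν) ^ κ * (∫⁻ x, N x.1 x.2 ^ p ∂μ.prod ν) ^ (1 - κ) :=
        ENNReal.lintegral_mul_norm_pow_le hG.aemeasurable (hN.pow_const p).aemeasurable hκ0
          (sub_nonneg.2 hκ1) (add_sub_cancel κ 1)
    _ = (∫⁻ a, ∫⁻ b, G a b ∂ν ∂μ) ^ κ * (∫⁻ a, ∫⁻ b, N a b ^ p ∂ν ∂μ) ^ (1 - κ) := by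
        rw [lintegral_prod (fun x : α × β => G x.1 x.2) hG.aemeasurable,
          lintegral_prod (fun x : α × β => N x.1 x.2 ^ p) (hN.pow_const p).aemeasurable]
    _ ≤ _ := by
        gcongr
        exact lintegral_lintegral_rpow_le hN hp hpr hr

lemma lintegral_lintegral_rpow_le_of_isProbabilityMeasure [IsProbabilityMeasure μ]
    {N : α → β → ℝ≥0∞} (hN : Measurable (Function.uncurry N)) {κ p r : ℝ} (hκ : 0 ≤ κ)
    (hκp : κ ≤ p) (hp : 0 < p) (hpr : p ≤ r) :
    ∫⁻ a, ∫⁻ b, N a b ^ κ ∂ν ∂μ ≤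
      ν univ ^ (1 - κ / r) * (∫⁻ a, (∫⁻ b, N a b ^ r ∂ν) ^ (p / r) ∂μ) ^ (κ / p) := by
  have hr : 0 < r := hp.trans_le hpr
  have hNr : Measurable fun a => (∫⁻ b, N a b ^ r ∂ν) ^ (p / r) :=
    ((hN.pow_const r).lintegral_prod_right').pow_const _
  have hexp : ∀ a, (∫⁻ b, N a b ^ r ∂ν) ^ (κ / r) = ((∫⁻ b, N a b ^ r ∂ν) ^ (p / r)) ^ (κ / p) :=
    fun a => by rw [← ENNReal.rpow_mul]; field_simp
  calc ∫⁻ a, ∫⁻ b, N a b ^ κ ∂ν ∂μ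
      ≤ ν univ ^ (1 - κ / r) * ∫⁻ a, (∫⁻ b, N a b ^ r ∂ν) ^ (κ / r) ∂μ :=
        lintegral_lintegral_rpow_le hN hκ (hκp.trans hpr) hr
    _ ≤ ν univ ^ (1 - κ / r) * (∫⁻ a, (∫⁻ b, N a b ^ r ∂ν) ^ (p / r) ∂μ) ^ (κ / p) := by
        simp_rw [hexp]
        gcongr
        simpa using lintegral_rpow_le_lintegral_mul_measure_univ (μ := μ) hNr.aemeasurable
          (div_nonneg hκ hp.le) ((div_le_one hp).2 hκp)

lemma lintegral_lintegral_add_mul_add {A B K : α → β → ℝ≥0∞}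
    (hA : Measurable (Function.uncurry A)) (hB : Measurable (Function.uncurry B))
    (hK : Measurable (Function.uncurry K)) (c : ℝ≥0∞) :
    ∫⁻ a, ∫⁻ b, A a b + c * (B a b + K a b) ∂ν ∂μ =
      ∫⁻ a, ∫⁻ b, A a b ∂ν ∂μ + c * ∫⁻ a, ∫⁻ b, B a b ∂ν ∂μ + c * ∫⁻ a, ∫⁻ b, K a b ∂ν ∂μ := by
  have hAa : ∀ a, Measurable (A a) := fun a => hA.comp measurable_prodMk_left
  have hBa : ∀ a, Measurable (B a) := fun a => hB.comp measurable_prodMk_left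
  have hKa : ∀ a, Measurable (K a) := fun a => hK.comp measurable_prodMk_left
  have hA' : Measurable fun a => ∫⁻ b, A a b ∂ν := hA.lintegral_prod_right'
  have hB' : Measurable fun a => ∫⁻ b, B a b ∂ν := hB.lintegral_prod_right'
  have hK' : Measurable fun a => ∫⁻ b, K a b ∂ν := hK.lintegral_prod_right'
  have inner : ∀ a, ∫⁻ b, A a b + c * (B a b + K a b) ∂ν =
      ∫⁻ b, A a b ∂ν + c * ∫⁻ b, B a b ∂ν + c * ∫⁻ b, K a b ∂ν := fun a => by
    have hBKa : Measurable fun b => B a b + K a b := (hBa a).add (hKa a)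
    rw [lintegral_add_left (hAa a), lintegral_const_mul _ hBKa, lintegral_add_left (hBa a),
      mul_add, add_assoc]
  simp_rw [inner]
  have hAB' : Measurable fun a => ∫⁻ b, A a b ∂ν + c * ∫⁻ b, B a b ∂ν :=
    hA'.add (hB'.const_mul c)
  rw [lintegral_add_left hAB', lintegral_add_left hA',
    lintegral_const_mul _ hB', lintegral_const_mul _ hK']

lemma lintegral_lintegral_le_of_le_add_mul [IsProbabilityMeasure μ] {F F₀ G N : α → β → ℝ≥0∞}
    (hF₀ : Measurable (Function.uncurry F₀)) (hG : Measurable (Function.uncurry G))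
    (hN : Measurable (Function.uncurry N)) {c κ q : ℝ} (hκ0 : 0 ≤ κ) (hκ1 : κ ≤ 1)
    (hκq : κ ≤ q) (hq0 : 0 < q) (hq2 : q ≤ 2)
    (hF : ∀ a b, F a b ≤ F₀ a b + ENNReal.ofReal c *
      (G a b ^ κ * N a b ^ (q * (1 - κ)) + N a b ^ κ)) :
    ∫⁻ a, ∫⁻ b, F a b ∂ν ∂μ ≤ ∫⁻ a, ∫⁻ b, F₀ a b ∂ν ∂μ +
      ENNReal.ofReal c * (∫⁻ a, ∫⁻ b, G a b ∂ν ∂μ) ^ κ *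
        (ν univ ^ (1 - q / 2) * ∫⁻ a, (∫⁻ b, N a b ^ (2 : ℝ) ∂ν) ^ (q / 2) ∂μ) ^ (1 - κ) +
      ENNReal.ofReal c * ν univ ^ (1 - κ / 2) *
        (∫⁻ a, (∫⁻ b, N a b ^ (2 : ℝ) ∂ν) ^ (q / 2) ∂μ) ^ (κ / q) := by
  have hGN : Measurable (Function.uncurry fun a b => G a b ^ κ * N a b ^ (q * (1 - κ))) :=
    (hG.pow_const κ).mul (hN.pow_const _)
  have hNκ : Measurable (Function.uncurry fun a b => N a b ^ κ) := hN.pow_const κ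
  calc ∫⁻ a, ∫⁻ b, F a b ∂ν ∂μ
      ≤ ∫⁻ a, ∫⁻ b, F₀ a b + ENNReal.ofReal c *
          (G a b ^ κ * N a b ^ (q * (1 - κ)) + N a b ^ κ) ∂ν ∂μ :=
        lintegral_mono fun a => lintegral_mono fun b => hF a b
    _ = _ := lintegral_lintegral_add_mul_add hF₀ hGN hNκ _
    _ ≤ _ := by
        rw [mul_assoc, mul_assoc]
        gcongr
        · exact lintegral_lintegral_rpow_mul_rpow_le hG hN hκ0 hκ1 hq0.le hq2 two_pos
        · exact lintegral_lintegral_rpow_le_of_isProbabilityMeasure hN hκ0 hκq hq0 hq2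

end Iterated

/-- Assembled inequalities (eq.split8)–(eq.split11) from the proof of Theorem 3.5(ii):
for a generator `f(t,z)` that is `λ`-Lipschitz in `z` and has sublinear growth of order `κ`
in `z` with weight `g`,
`E∫_0^T |f(r,Z_r)| ≤ E∫_0^T |f(r,0)| + γ_λ (E∫_0^T g)^κ (T^{1−q/2} E(∫_0^T |Z|²)^{q/2})^{1−κ}
+ γ_λ T^{1−κ/2} (E(∫_0^T |Z|²)^{q/2})^{κ/q}` where `γ_λ = (λ+γ) ∨ 1`.
All expectations may be infinite. -/
theorem stmt_14 {Ω : Type*} [MeasurableSpace Ω] (P : Measure Ω) [IsProbabilityMeasure P]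
    (T : ℝ) (hT : 0 < T) (d k : ℕ)
    (lam γ : ℝ) (hlam : 0 ≤ lam) (hγ : 0 ≤ γ)
    (κ q : ℝ) (hκ : κ ∈ Set.Ioo (0:ℝ) 1) (hq : q ∈ Set.Ioo κ 1)
    (g : Ω → ℝ → ℝ) (hgmeas : Measurable (Function.uncurry g)) (hg0 : ∀ ω r, 0 ≤ g ω r)
    (Z : Ω → ℝ → EuclideanSpace ℝ (Fin d × Fin k))
    (hZmeas : Measurable (Function.uncurry Z))
    (f : Ω → ℝ → EuclideanSpace ℝ (Fin d × Fin k) → EuclideanSpace ℝ (Fin k))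
    (hfmeas : Measurable fun p : Ω × ℝ × EuclideanSpace ℝ (Fin d × Fin k) =>
      f p.1 p.2.1 p.2.2)
    (hLip : ∀ ω t (z z' : EuclideanSpace ℝ (Fin d × Fin k)),
      ‖f ω t z - f ω t z'‖ ≤ lam * ‖z - z'‖)
    (hGrowth : ∀ ω t (z : EuclideanSpace ℝ (Fin d × Fin k)),
      ‖f ω t z - f ω t 0‖ ≤ γ * (g ω t + ‖z‖) ^ κ) :
    ∫⁻ ω, (∫⁻ r in Icc (0:ℝ) T, ENNReal.ofReal ‖f ω r (Z ω r)‖) ∂P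
      ≤ (∫⁻ ω, (∫⁻ r in Icc (0:ℝ) T, ENNReal.ofReal ‖f ω r 0‖) ∂P)
        + ENNReal.ofReal (max (lam + γ) 1) *
            (∫⁻ ω, (∫⁻ r in Icc (0:ℝ) T, ENNReal.ofReal (g ω r)) ∂P) ^ κ *
            (ENNReal.ofReal (T ^ (1 - q / 2)) *
              ∫⁻ ω, (∫⁻ r in Icc (0:ℝ) T, ENNReal.ofReal (‖Z ω r‖ ^ 2)) ^ (q / 2) ∂P) ^ (1 - κ)
        + ENNReal.ofReal (max (lam + γ) 1) * ENNReal.ofReal (T ^ (1 - κ / 2)) *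
            (∫⁻ ω, (∫⁻ r in Icc (0:ℝ) T, ENNReal.ofReal (‖Z ω r‖ ^ 2)) ^ (q / 2) ∂P) ^ (κ / q) := by
  obtain ⟨hκ0, hκ1⟩ := hκ
  obtain ⟨hqκ, hq1⟩ := hq
  have hq0 : 0 < q := hκ0.trans hqκ
  have hZsq : ∀ ω r, ENNReal.ofReal (‖Z ω r‖ ^ 2) = ENNReal.ofReal ‖Z ω r‖ ^ (2 : ℝ) :=
    fun ω r => by rw [ENNReal.ofReal_pow (norm_nonneg _), ENNReal.rpow_two]
  have hT_rpow : ∀ s : ℝ, 0 ≤ s → ENNReal.ofReal (T ^ s) = volume.restrict (Icc 0 T) univ ^ s :=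
    fun s hs => by
      rw [Measure.restrict_apply_univ, Real.volume_Icc, sub_zero,
        ENNReal.ofReal_rpow_of_nonneg hT.le hs]
  have hG : Measurable (Function.uncurry fun ω r => ENNReal.ofReal (g ω r)) :=
    hgmeas.ennreal_ofReal
  have hN : Measurable (Function.uncurry fun ω r => ENNReal.ofReal ‖Z ω r‖) :=
    hZmeas.norm.ennreal_ofReal
  have hF₀ : Measurable (Function.uncurry fun ω r => ENNReal.ofReal ‖f ω r 0‖) :=
    (hfmeas.comp (measurable_fst.prodMk (measurable_snd.prodMk measurable_const))).norm
      |>.ennreal_ofReal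
  simp_rw [hZsq]
  rw [hT_rpow _ (by linarith), hT_rpow _ (by linarith)]
  exact lintegral_lintegral_le_of_le_add_mul hF₀ hG hN hκ0.le hκ1.le hqκ.le hq0 (by linarith)
    fun ω r => ofReal_norm_apply_le_of_lipschitz_of_growth hlam hγ hκ0.le hκ1.le
      (mul_nonneg hq0.le (by linarith)) (hg0 ω r) (hLip ω r) (hGrowth ω r) (Z ω r)
end

section
/- Let λ, γ ≥ 0, let κ, β be real numbers with 0 ≤ κ < β ≤ 1, let g ≥ 0 be a real number, and let Ȳ ∈ ℝ^k, Z̄ ∈ ℝ^{d×k}. Suppose f : ℝ^k × ℝ^{d×k} → ℝ^k satisfies |f(y,z) − f(y,0)| ≤ γ (g + |y| + |z|)^κ for all y ∈ ℝ^k and z ∈ ℝ^{d×k}. Define ĝ := g + 3 + |Ȳ|^{κ/β} + |Z̄|^{κ/β}. Then for all y ∈ ℝ^k and z ∈ ℝ^{d×k}, |f(y + Ȳ, z + Z̄) − f(y + Ȳ, Z̄)| ≤ 2γ ( ĝ + |y| + |z| )^{β}. -/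
open Real

lemma aux_subadd {θ : ℝ} (h0 : 0 ≤ θ) (h1 : θ ≤ 1) {x y : ℝ} (hx : 0 ≤ x) (hy : 0 ≤ y) :
    (x + y) ^ θ ≤ x ^ θ + y ^ θ := by
  lift x to NNReal using hx
  lift y to NNReal using hy
  exact_mod_cast NNReal.rpow_add_le_add_rpow x y h0 h1

lemma aux_le_one_add {θ : ℝ} (h0 : 0 ≤ θ) (h1 : θ ≤ 1) {x : ℝ} (hx : 0 ≤ x) :
    x ^ θ ≤ 1 + x := by
  rcases le_or_gt x 1 with h | h
  · have : x ^ θ ≤ 1 := Real.rpow_le_one hx h h0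
    linarith
  · have : x ^ θ ≤ x ^ (1:ℝ) := Real.rpow_le_rpow_of_exponent_le h.le h1
    rw [Real.rpow_one] at this
    linarith

/-- Verification from the proof of Theorem 3.6: if `f : ℝ^k × ℝ^{d×k} → ℝ^k` satisfies the
sublinear growth condition `‖f(y,z) − f(y,0)‖ ≤ γ (g + ‖y‖ + ‖z‖)^κ`, then the shifted generator
satisfies the analogous condition with constant `2γ`, exponent `β ∈ (κ,1]` and modified weight
`ĝ = g + 3 + ‖Ȳ‖^{κ/β} + ‖Z̄‖^{κ/β}`. -/
theorem stmt_15 (k d : ℕ) (lam γ : ℝ) (hlam : 0 ≤ lam) (hγ : 0 ≤ γ)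
    (κ β : ℝ) (hκ : 0 ≤ κ) (hκβ : κ < β) (hβ : β ≤ 1)
    (g : ℝ) (hg : 0 ≤ g)
    (Ybar : EuclideanSpace ℝ (Fin k)) (Zbar : EuclideanSpace ℝ (Fin d × Fin k))
    (f : EuclideanSpace ℝ (Fin k) → EuclideanSpace ℝ (Fin d × Fin k) → EuclideanSpace ℝ (Fin k))
    (hf : ∀ (y : EuclideanSpace ℝ (Fin k)) (z : EuclideanSpace ℝ (Fin d × Fin k)),
      ‖f y z - f y 0‖ ≤ γ * (g + ‖y‖ + ‖z‖) ^ κ) :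
    ∀ (y : EuclideanSpace ℝ (Fin k)) (z : EuclideanSpace ℝ (Fin d × Fin k)),
      ‖f (y + Ybar) (z + Zbar) - f (y + Ybar) Zbar‖
        ≤ 2 * γ * ((g + 3 + ‖Ybar‖ ^ (κ / β) + ‖Zbar‖ ^ (κ / β)) + ‖y‖ + ‖z‖) ^ β := by
  intro y z
  have hβ0 : 0 < β := lt_of_le_of_lt hκ hκβ
  set θ := κ / β with hθdef
  have hθ0 : 0 ≤ θ := div_nonneg hκ hβ0.le
  have hθ1 : θ ≤ 1 := by
    rw [div_le_one hβ0]; exact hκβ.le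
  set S : ℝ := g + ‖y‖ + ‖Ybar‖ + ‖z‖ + ‖Zbar‖ with hS
  set T : ℝ := (g + 3 + ‖Ybar‖ ^ θ + ‖Zbar‖ ^ θ) + ‖y‖ + ‖z‖ with hT
  have hSnn : 0 ≤ S := by positivity
  have hTnn : 0 ≤ T := by positivity
  -- key: S ^ κ ≤ T ^ β
  have key : S ^ κ ≤ T ^ β := by
    have hSθ : S ^ θ ≤ T := by
      have h1 : S ^ θ ≤ (g + ‖y‖ + ‖Ybar‖ + ‖z‖) ^ θ + ‖Zbar‖ ^ θ :=
        aux_subadd hθ0 hθ1 (by positivity) (norm_nonneg _)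
      have h2 : (g + ‖y‖ + ‖Ybar‖ + ‖z‖) ^ θ ≤ (g + ‖y‖ + ‖Ybar‖) ^ θ + ‖z‖ ^ θ :=
        aux_subadd hθ0 hθ1 (by positivity) (norm_nonneg _)
      have h3 : (g + ‖y‖ + ‖Ybar‖) ^ θ ≤ (g + ‖y‖) ^ θ + ‖Ybar‖ ^ θ :=
        aux_subadd hθ0 hθ1 (by positivity) (norm_nonneg _)
      have h4 : (g + ‖y‖) ^ θ ≤ g ^ θ + ‖y‖ ^ θ :=
        aux_subadd hθ0 hθ1 hg (norm_nonneg _)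
      have h5 : g ^ θ ≤ 1 + g := aux_le_one_add hθ0 hθ1 hg
      have h6 : ‖y‖ ^ θ ≤ 1 + ‖y‖ := aux_le_one_add hθ0 hθ1 (norm_nonneg _)
      have h7 : ‖z‖ ^ θ ≤ 1 + ‖z‖ := aux_le_one_add hθ0 hθ1 (norm_nonneg _)
      rw [hT]; linarith
    calc S ^ κ = (S ^ θ) ^ β := by
          rw [← Real.rpow_mul hSnn, hθdef, div_mul_cancel₀ _ hβ0.ne']
      _ ≤ T ^ β := Real.rpow_le_rpow (Real.rpow_nonneg hSnn θ) hSθ hβ0.le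
  -- triangle inequality
  have tri : ‖f (y + Ybar) (z + Zbar) - f (y + Ybar) Zbar‖
      ≤ ‖f (y + Ybar) (z + Zbar) - f (y + Ybar) 0‖ + ‖f (y + Ybar) Zbar - f (y + Ybar) 0‖ := by
    have := norm_sub_le (f (y + Ybar) (z + Zbar) - f (y + Ybar) 0)
      (f (y + Ybar) Zbar - f (y + Ybar) 0)
    simpa using this
  have b1 : ‖f (y + Ybar) (z + Zbar) - f (y + Ybar) 0‖ ≤ γ * S ^ κ := by
    refine (hf _ _).trans ?_
    gcongr
    have := norm_add_le y Ybar
    have := norm_add_le z Zbar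
    rw [hS]; linarith
  have b2 : ‖f (y + Ybar) Zbar - f (y + Ybar) 0‖ ≤ γ * S ^ κ := by
    refine (hf _ _).trans ?_
    gcongr
    have := norm_add_le y Ybar
    have hz : (0:ℝ) ≤ ‖z‖ := norm_nonneg _
    rw [hS]; linarith
  calc ‖f (y + Ybar) (z + Zbar) - f (y + Ybar) Zbar‖ ≤ γ * S ^ κ + γ * S ^ κ := tri.trans (by linarith)
    _ = 2 * γ * S ^ κ := by ring
    _ ≤ 2 * γ * T ^ β := by
        have := mul_le_mul_of_nonneg_left key (by linarith : (0:ℝ) ≤ 2 * γ)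
        linarith
end
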